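/- Minimal-word invariance under the cluster map: for a word A ∈ {0,1}^{2n} with A_{2n} = 1 whose only balance point is at the start (every proper suffix having strictly more ones than zeros, and the full word exactly balanced), the word Γ A of length 2n−2 defined by (Γ A)_{i+1} = A_i + min{A_{i-1}, 1−A_i} − min{A_i, 1−A_{i+1}} for 1 ≤ i ≤ 2n−2 is again such a minimal word of length 2n−2. -/

import Mathlib

/-! Under the traffic rule a particle hops from `i - 1` to `i` exactly when `A (i - 1) = 1` and
`A i = 0`, so the number of ones of `T A` in a window `[a, b]` is that of `A`, plus the particle
entering at `a`, minus the one leaving at `b`. For the window `[k + 1, 2n - 1]` underlying a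
suffix of `Γ A`, nothing leaves (a particle at `2n - 1` would be blocked by `A (2n) = 1`) and the
dropped last symbol costs one `1`, so the height `2 · #ones - length` of the suffix of `Γ A` at
`k` equals the height of the suffix of `A` at `k + 1`, minus one, plus twice the incoming
particle. Heights of suffixes of `A` are at least `1`; if the one at `k + 1` is exactly `1`, its
neighbours at `k` and `k + 2` force `A k = 1` and `A (k + 1) = 0`, so a particle does enter. -/

/-- The traffic rule (simultaneous 10 → 01) applied to a configuration on ℤ;
words of length 2n are embedded on positions 1,…,2n with zeros outside
(boundary convention A₀ = 0, A_{2n+1} = 0). -/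
def T (A : ℤ → ℕ) : ℤ → ℕ :=
  fun i => A i + min (A (i - 1)) (1 - A i) - min (A i) (1 - A (i + 1))

/-- Ω^{2n}: binary words of length 2n (supported on [1,2n]), ending with a one,
exactly balanced (n ones), and such that every proper suffix segment has
strictly more ones than zeros (the only balance point is at the start). -/
def OmegaW (n : ℕ) (A : ℤ → ℕ) : Prop :=
  (∀ i : ℤ, (i < 1 ∨ (2 * n : ℤ) < i) → A i = 0) ∧
  A (2 * n) = 1 ∧
  (∑ i ∈ Finset.Icc (1 : ℤ) (2 * n), (A i : ℤ)) = n ∧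
  ∀ k : ℤ, 1 < k → k ≤ 2 * n →
    2 * (∑ i ∈ Finset.Icc k (2 * n), (A i : ℤ)) > 2 * n - k + 1

/-- The map Γ: apply the traffic rule and drop the first and last symbols,
producing a word of length 2n - 2 (supported on [1, 2n-2]). -/
def Gamma (n : ℕ) (A : ℤ → ℕ) : ℤ → ℕ :=
  fun i => if 1 ≤ i ∧ i ≤ 2 * (n : ℤ) - 2 then T A (i + 1) else 0

open Finset

section IntervalSums

variable {M : Type*} (f : ℤ → M)

lemma sum_Icc_eq_add_sum_Icc_add_one [AddCommMonoid M] {a b : ℤ} (hab : a ≤ b) :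
    ∑ i ∈ Icc a b, f i = f a + ∑ i ∈ Icc (a + 1) b, f i := by
  rw [Icc_eq_cons_Ioc hab, sum_cons, Icc_add_one_left_eq_Ioc]

lemma sum_Icc_eq_sum_Icc_sub_one_add [AddCommMonoid M] {a b : ℤ} (hab : a ≤ b) :
    ∑ i ∈ Icc a b, f i = ∑ i ∈ Icc a (b - 1), f i + f b := by
  rw [Icc_eq_cons_Ico hab, sum_cons, Icc_sub_one_right_eq_Ico, add_comm]

lemma sum_Icc_sub_add_one [AddCommGroup M] {a b : ℤ} (hab : a - 1 ≤ b) :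
    ∑ i ∈ Icc a b, (f i - f (i + 1)) = f a - f (b + 1) := by
  induction b, hab using Int.leInduction with
  | base => simp
  | succ b hab ih =>
    rw [sum_Icc_eq_sum_Icc_sub_one_add _ (by omega), add_sub_cancel_right, ih]
    abel

lemma sum_Icc_add_one [AddCommMonoid M] (a b : ℤ) :
    ∑ i ∈ Icc a b, f (i + 1) = ∑ i ∈ Icc (a + 1) (b + 1), f i := by
  rw [← map_add_right_Icc, sum_map]
  rfl

end IntervalSums

def flux (A : ℤ → ℕ) (i : ℤ) : ℕ := min (A (i - 1)) (1 - A i)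

lemma T_eq_add_flux_sub_flux (A : ℤ → ℕ) (i : ℤ) :
    (T A i : ℤ) = A i + flux A i - flux A (i + 1) := by
  have hout : flux A (i + 1) ≤ A i + flux A i :=
    le_add_right (by simpa only [flux, add_sub_cancel_right] using min_le_left _ _)
  simp only [T, flux, add_sub_cancel_right] at hout ⊢
  rw [Nat.cast_sub hout, Nat.cast_add]

lemma sum_Icc_T (A : ℤ → ℕ) {a b : ℤ} (hab : a - 1 ≤ b) :
    ∑ i ∈ Icc a b, (T A i : ℤ) = ∑ i ∈ Icc a b, (A i : ℤ) + flux A a - flux A (b + 1) := by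
  simp only [T_eq_add_flux_sub_flux, add_sub_assoc, sum_add_distrib,
    sum_Icc_sub_add_one (fun i => (flux A i : ℤ)) hab]

lemma sum_Icc_Gamma (n : ℕ) (A : ℤ → ℕ) {k : ℤ} (hk : 1 ≤ k) :
    ∑ i ∈ Icc k (2 * n - 2), (Gamma n A i : ℤ) = ∑ i ∈ Icc (k + 1) (2 * n - 1), (T A i : ℤ) := by
  have hGamma : ∀ i ∈ Icc k (2 * (n : ℤ) - 2), Gamma n A i = T A (i + 1) := by
    intro i hi
    rw [mem_Icc] at hi
    exact if_pos ⟨by omega, hi.2⟩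
  rw [sum_congr rfl fun i hi => congrArg _ (hGamma i hi), sum_Icc_add_one (fun i => (T A i : ℤ))]
  ring_nf

lemma sum_Icc_Gamma_of_last_eq_one {n : ℕ} {A : ℤ → ℕ} (hlast : A (2 * n) = 1) {k : ℤ}
    (hk₁ : 1 ≤ k) (hk₂ : k ≤ 2 * n - 1) :
    ∑ i ∈ Icc k (2 * n - 2), (Gamma n A i : ℤ) =
      ∑ i ∈ Icc (k + 1) (2 * n), (A i : ℤ) - 1 + flux A (k + 1) := by
  have hblocked : flux A (2 * n) = 0 := by simp [flux, hlast]
  rw [sum_Icc_Gamma n A hk₁, sum_Icc_T A (by omega), sub_add_cancel, hblocked,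
    sum_Icc_eq_sum_Icc_sub_one_add _ (show k + 1 ≤ 2 * n by omega), hlast]
  push_cast
  ring

namespace OmegaW

variable {n : ℕ} {A : ℤ → ℕ}

lemma apply_one (h : OmegaW n A) (hn : 1 ≤ n) : A 1 = 0 := by
  obtain ⟨-, -, hsum, hsuf⟩ := h
  have h2 := hsuf 2 one_lt_two (by omega)
  rw [sum_Icc_eq_add_sum_Icc_add_one _ (show (1 : ℤ) ≤ 2 * n by omega), one_add_one_eq_two]
    at hsum
  omega

lemma one_le_apply_two_mul_sub_one (h : OmegaW n A) (hn : 2 ≤ n) : 1 ≤ A (2 * n - 1) := by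
  obtain ⟨-, hlast, -, hsuf⟩ := h
  have h2 := hsuf (2 * n - 1) (by omega) (by omega)
  rw [sum_Icc_eq_add_sum_Icc_add_one _ (by omega), sub_add_cancel, Icc_self, sum_singleton,
    hlast] at h2
  omega

lemma flux_eq_one_of_tight (h : OmegaW n A) {k : ℤ} (hk₁ : 1 < k) (hk₂ : k ≤ 2 * n - 2)
    (htight : 2 * ∑ i ∈ Icc (k + 1) (2 * n), (A i : ℤ) = 2 * n - k + 1) :
    flux A (k + 1) = 1 := by
  obtain ⟨-, -, -, hsuf⟩ := h
  have hk := hsuf k hk₁ (by omega)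
  have hk2 := hsuf (k + 2) (by omega) (by omega)
  rw [sum_Icc_eq_add_sum_Icc_add_one _ (show k ≤ 2 * n by omega)] at hk
  have hsplit := sum_Icc_eq_add_sum_Icc_add_one (fun i => (A i : ℤ)) (show k + 1 ≤ 2 * n by omega)
  rw [add_assoc, one_add_one_eq_two] at hsplit
  simp only [flux, add_sub_cancel_right]
  omega

lemma sum_Icc_one_Gamma (h : OmegaW n A) (hn : 2 ≤ n) :
    ∑ i ∈ Icc (1 : ℤ) (2 * n - 2), (Gamma n A i : ℤ) = n - 1 := by
  have hA1 := h.apply_one (by omega)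
  obtain ⟨-, hlast, hsum, -⟩ := h
  have hflux : flux A 2 = 0 := by simp [flux, hA1]
  rw [sum_Icc_Gamma_of_last_eq_one hlast le_rfl (by omega), one_add_one_eq_two, hflux]
  rw [sum_Icc_eq_add_sum_Icc_add_one _ (show (1 : ℤ) ≤ 2 * n by omega), one_add_one_eq_two,
    hA1] at hsum
  push_cast at hsum ⊢
  omega

lemma two_mul_sum_Icc_Gamma_gt (h : OmegaW n A) {k : ℤ} (hk₁ : 1 < k) (hk₂ : k ≤ 2 * n - 2) :
    2 * ∑ i ∈ Icc k (2 * n - 2), (Gamma n A i : ℤ) > 2 * n - 2 - k + 1 := by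
  rw [sum_Icc_Gamma_of_last_eq_one h.2.1 hk₁.le (by omega)]
  have hk := h.2.2.2 (k + 1) (by omega) (by omega)
  rcases (show 2 * n - k + 1 < 2 * ∑ i ∈ Icc (k + 1) (2 * n), (A i : ℤ) ∨
      2 * ∑ i ∈ Icc (k + 1) (2 * n), (A i : ℤ) = 2 * n - k + 1 by omega) with hslack | htight
  · omega
  · rw [h.flux_eq_one_of_tight hk₁ hk₂ htight]
    omega

lemma Gamma_two_mul_sub_two (h : OmegaW n A) (hn : 2 ≤ n) (hA : ∀ i, A i ≤ 1) :
    Gamma n A (2 * n - 2) = 1 := by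
  have h1 : A (2 * n - 1) = 1 := le_antisymm (hA _) (h.one_le_apply_two_mul_sub_one hn)
  have hpos : (1 : ℤ) ≤ 2 * n - 2 := by omega
  simp [Gamma, T, hpos, show (2 : ℤ) * n - 2 + 1 = 2 * n - 1 by ring, h1, h.2.1]

end OmegaW

/-- Γ maps minimal words to minimal words: Γ : Ω^{2n} → Ω^{2n-2}. -/
theorem Gamma_maps_Omega (n : ℕ) (hn : 2 ≤ n) (A : ℤ → ℕ)
    (hA : ∀ i, A i ≤ 1) (h : OmegaW n A) :
    OmegaW (n - 1) (Gamma n A) := by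
  have hlen : 2 * ((n - 1 : ℕ) : ℤ) = 2 * n - 2 := by omega
  refine ⟨fun i hi => if_neg (by omega), ?_, ?_, fun k hk₁ hk₂ => ?_⟩
  · rw [hlen]
    exact h.Gamma_two_mul_sub_two hn hA
  · rw [hlen, h.sum_Icc_one_Gamma hn]
    omega
  · rw [hlen] at hk₂ ⊢
    exact h.two_mul_sum_Icc_Gamma_gt hk₁ hk₂
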